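/- For η > -1 fixed, the sequence A_ρ/√ρ converges in distribution (equivalently, in probability) to the constant 1 as ρ → ∞, where A_ρ has distribution ν_{ρ,η}. -/

import Mathlib

open scoped BigOperators
open Filter

/-- Unnormalized weight of the distribution `ν_{ρ,η}`. -/
noncomputable def nuWeight (η ρ : ℝ) (k : ℕ) : ℝ :=
  ρ ^ k / (Nat.factorial k : ℝ) * ∏ i ∈ Finset.range k, 1 / (η + (i + 1))

/-- The distribution `ν_{ρ,η}(k) = (1/Z_ρ)·ρ^k/k!·∏_{i=1}^k 1/(η+i)`. -/
noncomputable def nuDist (η ρ : ℝ) (k : ℕ) : ℝ :=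
  nuWeight η ρ k / ∑' j : ℕ, nuWeight η ρ j

lemma nuWeight_pos {η ρ : ℝ} (hη : -1 < η) (hρ : 0 < ρ) (k : ℕ) : 0 < nuWeight η ρ k := by
  unfold nuWeight
  apply mul_pos
  · positivity
  · apply Finset.prod_pos
    intro i _
    have : (0:ℝ) < η + (i+1) := by
      have : (0:ℝ) ≤ i := Nat.cast_nonneg i
      linarith
    positivity

lemma nuWeight_rec {η ρ : ℝ} (hη : -1 < η) (k : ℕ) :
    ((k:ℝ)+1) * (η + ((k:ℝ)+1)) * nuWeight η ρ (k+1) = ρ * nuWeight η ρ k := by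
  have h1 : (0:ℝ) < η + ((k:ℝ)+1) := by
    have : (0:ℝ) ≤ k := Nat.cast_nonneg k
    linarith
  unfold nuWeight
  rw [Finset.prod_range_succ]
  have hf : ((k+1).factorial : ℝ) = ((k:ℝ)+1) * (k.factorial : ℝ) := by
    rw [Nat.factorial_succ]; push_cast; ring
  rw [hf, pow_succ]
  have hk : ((k:ℝ)+1) ≠ 0 := by positivity
  have hfk : (k.factorial : ℝ) ≠ 0 := Nat.cast_ne_zero.2 k.factorial_ne_zero
  have hne : η + ((k:ℝ)+1) ≠ 0 := ne_of_gt h1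
  set P := ∏ i ∈ Finset.range k, 1 / (η + ((i:ℝ) + 1)) with hP
  have : η + ((k:ℝ) + 1) = η + ((k:ℝ)+1) := rfl
  push_cast
  field_simp


lemma nuWeight_le {η ρ : ℝ} (hη : -1 < η) (hρ : 0 < ρ) (k : ℕ) :
    nuWeight η ρ k ≤ (ρ / (η+1)) ^ k / (Nat.factorial k : ℝ) := by
  have hη1 : (0:ℝ) < η + 1 := by linarith
  unfold nuWeight
  have hprod : (∏ i ∈ Finset.range k, 1 / (η + ((i:ℕ) + 1) : ℝ)) ≤ (1/(η+1))^k := by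
    have : ((1:ℝ)/(η+1))^k = ∏ _i ∈ Finset.range k, (1/(η+1) : ℝ) := by
      rw [Finset.prod_const, Finset.card_range]
    rw [this]
    apply Finset.prod_le_prod
    · intro i _
      have : (0:ℝ) < η + (i+1) := by
        have : (0:ℝ) ≤ i := Nat.cast_nonneg i
        linarith
      positivity
    · intro i _
      apply one_div_le_one_div_of_le hη1
      have : (0:ℝ) ≤ i := Nat.cast_nonneg i
      linarith
  calc ρ ^ k / (Nat.factorial k : ℝ) * ∏ i ∈ Finset.range k, 1 / (η + ((i:ℕ) + 1) : ℝ)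
      ≤ ρ ^ k / (Nat.factorial k : ℝ) * (1/(η+1))^k :=
        mul_le_mul_of_nonneg_left hprod (by positivity)
    _ = (ρ / (η+1)) ^ k / (Nat.factorial k : ℝ) := by
        rw [div_pow, div_pow, one_pow]
        ring

lemma summable_pow_mul_nuWeight {η ρ : ℝ} (hη : -1 < η) (hρ : 0 < ρ) (n : ℕ) :
    Summable (fun k : ℕ => (k:ℝ)^n * nuWeight η ρ k) := by
  have hη1 : (0:ℝ) < η + 1 := by linarith
  set x := ρ / (η+1) with hx
  have hx0 : 0 < x := by positivity
  have h2x : Summable (fun k : ℕ => (2*x)^k / (Nat.factorial k : ℝ)) :=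
    Real.summable_pow_div_factorial (2*x)
  have hev : ∀ᶠ (k:ℕ) in atTop, (k:ℝ)^n ≤ 2^k := by
    have := tendsto_pow_const_div_const_pow_of_one_lt n (r := 2) one_lt_two
    filter_upwards [this.eventually (eventually_le_nhds (by norm_num : (0:ℝ) < 1))] with k hk
    have h2k : (0:ℝ) < 2^k := by positivity
    calc (k:ℝ)^n = ((k:ℝ)^n / 2^k) * 2^k := by field_simp
      _ ≤ 1 * 2^k := mul_le_mul_of_nonneg_right hk h2k.le
      _ = 2^k := one_mul _
  apply summable_of_isBigO_nat h2x
  rw [Asymptotics.isBigO_iff]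
  refine ⟨1, ?_⟩
  filter_upwards [hev] with k hk
  have hw := nuWeight_pos hη hρ k
  have hb := nuWeight_le hη hρ k
  have h1 : ‖(k:ℝ)^n * nuWeight η ρ k‖ = (k:ℝ)^n * nuWeight η ρ k := by
    rw [Real.norm_eq_abs, abs_of_nonneg (mul_nonneg (by positivity) hw.le)]
  have h2 : ‖(2*x)^k / (Nat.factorial k : ℝ)‖ = (2*x)^k / (Nat.factorial k : ℝ) := by
    rw [Real.norm_eq_abs, abs_of_nonneg (by positivity)]
  rw [h1, h2, one_mul]
  calc (k:ℝ)^n * nuWeight η ρ k ≤ 2^k * (x ^ k / (Nat.factorial k : ℝ)) := by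
        apply mul_le_mul hk hb hw.le (by positivity)
    _ = (2*x)^k / (Nat.factorial k : ℝ) := by rw [mul_pow]; ring

noncomputable def nuM (η ρ : ℝ) (n : ℕ) : ℝ := ∑' k : ℕ, (k:ℝ)^n * nuWeight η ρ k

lemma summable_poly {η ρ : ℝ} (hη : -1 < η) (hρ : 0 < ρ) (a b c d e : ℝ) :
    Summable (fun k : ℕ => (a*(k:ℝ)^4 + b*(k:ℝ)^3 + c*(k:ℝ)^2 + d*(k:ℝ) + e) * nuWeight η ρ k) := by
  have s4 := (summable_pow_mul_nuWeight hη hρ 4).mul_left a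
  have s3 := (summable_pow_mul_nuWeight hη hρ 3).mul_left b
  have s2 := (summable_pow_mul_nuWeight hη hρ 2).mul_left c
  have s1 := (summable_pow_mul_nuWeight hη hρ 1).mul_left d
  have s0 := (summable_pow_mul_nuWeight hη hρ 0).mul_left e
  exact (((((s4.add s3).add s2).add s1).add s0).congr (fun k => by push_cast; ring))

lemma tsum_poly {η ρ : ℝ} (hη : -1 < η) (hρ : 0 < ρ) (a b c d e : ℝ) :
    ∑' k : ℕ, (a*(k:ℝ)^4 + b*(k:ℝ)^3 + c*(k:ℝ)^2 + d*(k:ℝ) + e) * nuWeight η ρ k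
      = a * nuM η ρ 4 + b * nuM η ρ 3 + c * nuM η ρ 2 + d * nuM η ρ 1 + e * nuM η ρ 0 := by
  have s4 := (summable_pow_mul_nuWeight hη hρ 4).mul_left a
  have s3 := (summable_pow_mul_nuWeight hη hρ 3).mul_left b
  have s2 := (summable_pow_mul_nuWeight hη hρ 2).mul_left c
  have s1 := (summable_pow_mul_nuWeight hη hρ 1).mul_left d
  have s0 := (summable_pow_mul_nuWeight hη hρ 0).mul_left e
  have h : ∀ k : ℕ, (a*(k:ℝ)^4 + b*(k:ℝ)^3 + c*(k:ℝ)^2 + d*(k:ℝ) + e) * nuWeight η ρ k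
      = a*((k:ℝ)^4 * nuWeight η ρ k) + (b*((k:ℝ)^3 * nuWeight η ρ k)
        + (c*((k:ℝ)^2 * nuWeight η ρ k) + (d*((k:ℝ)^1 * nuWeight η ρ k)
        + e*((k:ℝ)^0 * nuWeight η ρ k)))) := fun k => by push_cast; ring
  rw [tsum_congr h, Summable.tsum_add s4 (s3.add (s2.add (s1.add s0))),
      Summable.tsum_add s3 (s2.add (s1.add s0)), Summable.tsum_add s2 (s1.add s0), Summable.tsum_add s1 s0,
      tsum_mul_left, tsum_mul_left, tsum_mul_left, tsum_mul_left, tsum_mul_left]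
  unfold nuM
  ring

lemma momentA {η ρ : ℝ} (hη : -1 < η) (hρ : 0 < ρ) :
    nuM η ρ 2 + η * nuM η ρ 1 = ρ * nuM η ρ 0 := by
  have hA : Summable (fun k : ℕ => ((k:ℝ)^2 + η*(k:ℝ)) * nuWeight η ρ k) :=
    (summable_poly hη hρ 0 0 1 η 0).congr (fun k => by ring)
  have h1 : ∑' k : ℕ, ((k:ℝ)^2 + η*(k:ℝ)) * nuWeight η ρ k
      = nuM η ρ 2 + η * nuM η ρ 1 := by
    rw [show (fun k : ℕ => ((k:ℝ)^2 + η*(k:ℝ)) * nuWeight η ρ k)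
        = (fun k : ℕ => (0*(k:ℝ)^4 + 0*(k:ℝ)^3 + 1*(k:ℝ)^2 + η*(k:ℝ) + 0) * nuWeight η ρ k)
        from funext fun k => by ring, tsum_poly hη hρ]
    ring
  have h2 : ∑' k : ℕ, ((k:ℝ)^2 + η*(k:ℝ)) * nuWeight η ρ k = ρ * nuM η ρ 0 := by
    rw [Summable.tsum_eq_zero_add hA]
    have h0 : ((0:ℕ):ℝ)^2 + η*((0:ℕ):ℝ) = 0 := by norm_num
    rw [show (((0:ℕ):ℝ)^2 + η*((0:ℕ):ℝ)) * nuWeight η ρ 0 = 0 by rw [h0]; ring]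
    rw [tsum_congr (fun k : ℕ => show ((((k+1):ℕ):ℝ)^2 + η*(((k+1):ℕ):ℝ)) * nuWeight η ρ (k+1)
        = ρ * nuWeight η ρ k from by
      have hrec := nuWeight_rec (ρ := ρ) hη k
      push_cast
      linear_combination hrec), tsum_mul_left]
    have : nuM η ρ 0 = ∑' k : ℕ, nuWeight η ρ k := by
      unfold nuM; exact tsum_congr fun k => by rw [pow_zero, one_mul]
    rw [this, zero_add]
  linarith [h1, h2]

lemma momentB {η ρ : ℝ} (hη : -1 < η) (hρ : 0 < ρ) :
    nuM η ρ 4 + 2*η*nuM η ρ 3 + η^2*nuM η ρ 2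
      = ρ * (nuM η ρ 2 + (2+η)*nuM η ρ 1 + (1+η)*nuM η ρ 0) := by
  have hB : Summable (fun k : ℕ => ((k:ℝ)^2 + η*(k:ℝ))^2 * nuWeight η ρ k) :=
    (summable_poly hη hρ 1 (2*η) (η^2) 0 0).congr (fun k => by ring)
  have h1 : ∑' k : ℕ, ((k:ℝ)^2 + η*(k:ℝ))^2 * nuWeight η ρ k
      = nuM η ρ 4 + 2*η*nuM η ρ 3 + η^2*nuM η ρ 2 := by
    rw [show (fun k : ℕ => ((k:ℝ)^2 + η*(k:ℝ))^2 * nuWeight η ρ k)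
        = (fun k : ℕ => (1*(k:ℝ)^4 + (2*η)*(k:ℝ)^3 + (η^2)*(k:ℝ)^2 + 0*(k:ℝ) + 0) * nuWeight η ρ k)
        from funext fun k => by ring, tsum_poly hη hρ]
    ring
  have h2 : ∑' k : ℕ, ((k:ℝ)^2 + η*(k:ℝ))^2 * nuWeight η ρ k
      = ρ * (nuM η ρ 2 + (2+η)*nuM η ρ 1 + (1+η)*nuM η ρ 0) := by
    rw [Summable.tsum_eq_zero_add hB]
    rw [show ((((0:ℕ):ℝ))^2 + η*(((0:ℕ)):ℝ))^2 * nuWeight η ρ 0 = 0 by norm_num]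
    rw [tsum_congr (fun k : ℕ => show ((((k+1):ℕ):ℝ)^2 + η*(((k+1):ℕ):ℝ))^2 * nuWeight η ρ (k+1)
        = (ρ*(k:ℝ)^2 + (ρ*(2+η))*(k:ℝ) + ρ*(1+η)) * nuWeight η ρ k from by
      have hrec := nuWeight_rec (ρ := ρ) hη k
      push_cast
      linear_combination (((k:ℝ)+1)^2 + η*((k:ℝ)+1)) * hrec)]
    rw [show (fun k : ℕ => (ρ*(k:ℝ)^2 + (ρ*(2+η))*(k:ℝ) + ρ*(1+η)) * nuWeight η ρ k)
        = (fun k : ℕ => (0*(k:ℝ)^4 + 0*(k:ℝ)^3 + ρ*(k:ℝ)^2 + (ρ*(2+η))*(k:ℝ) + ρ*(1+η)) * nuWeight η ρ k)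
        from funext fun k => by ring, tsum_poly hη hρ]
    ring
  linarith [h1, h2]

lemma S2_eq {η ρ : ℝ} (hη : -1 < η) (hρ : 0 < ρ) :
    ∑' k : ℕ, ((k:ℝ)^2 + η*(k:ℝ) - ρ)^2 * nuWeight η ρ k
      = 2*ρ*nuM η ρ 1 + (1+η)*ρ*nuM η ρ 0 := by
  have h1 : ∑' k : ℕ, ((k:ℝ)^2 + η*(k:ℝ) - ρ)^2 * nuWeight η ρ k
      = nuM η ρ 4 + (2*η)*nuM η ρ 3 + (η^2-2*ρ)*nuM η ρ 2 + (-2*η*ρ)*nuM η ρ 1 + ρ^2*nuM η ρ 0 := by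
    rw [show (fun k : ℕ => ((k:ℝ)^2 + η*(k:ℝ) - ρ)^2 * nuWeight η ρ k)
        = (fun k : ℕ => (1*(k:ℝ)^4 + (2*η)*(k:ℝ)^3 + (η^2-2*ρ)*(k:ℝ)^2 + (-2*η*ρ)*(k:ℝ) + ρ^2) * nuWeight η ρ k)
        from funext fun k => by ring, tsum_poly hη hρ]
    ring
  rw [h1]
  linear_combination momentB hη hρ - ρ * momentA hη hρ

lemma nuM_nonneg {η ρ : ℝ} (hη : -1 < η) (hρ : 0 < ρ) (n : ℕ) : 0 ≤ nuM η ρ n :=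
  tsum_nonneg fun k => mul_nonneg (by positivity) (nuWeight_pos hη hρ k).le

lemma nuM_zero_pos {η ρ : ℝ} (hη : -1 < η) (hρ : 0 < ρ) : 0 < nuM η ρ 0 := by
  have hs := summable_pow_mul_nuWeight hη hρ 0
  exact Summable.tsum_pos hs (fun k => mul_nonneg (by positivity) (nuWeight_pos hη hρ k).le) 0
    (by simpa using (nuWeight_pos hη hρ 0))

lemma nuZ_eq {η ρ : ℝ} : (∑' k : ℕ, nuWeight η ρ k) = nuM η ρ 0 := by
  unfold nuM; exact tsum_congr fun k => by rw [pow_zero, one_mul]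

lemma M1_bound {η ρ : ℝ} (hη : -1 < η) (hρ : 0 < ρ) (h : |η| ≤ Real.sqrt ρ) :
    nuM η ρ 1 ≤ 2 * Real.sqrt ρ * nuM η ρ 0 := by
  set s := Real.sqrt ρ with hs
  have hs0 : 0 < s := Real.sqrt_pos.2 hρ
  have hs2 : s^2 = ρ := Real.sq_sqrt hρ.le
  have key : s * nuM η ρ 1 ≤ (1/2) * nuM η ρ 2 + (ρ/2) * nuM η ρ 0 := by
    have hle : ∀ k : ℕ, s * ((k:ℝ)^1 * nuWeight η ρ k)
        ≤ ((1/2)*(k:ℝ)^2 + (ρ/2)) * nuWeight η ρ k := by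
      intro k
      have hw := (nuWeight_pos hη hρ k).le
      have h1 : s * (k:ℝ)^1 ≤ (1/2)*(k:ℝ)^2 + ρ/2 := by
        nlinarith [sq_nonneg ((k:ℝ) - s)]
      nlinarith [mul_le_mul_of_nonneg_right h1 hw]
    have hsum1 := (summable_pow_mul_nuWeight hη hρ 1).mul_left s
    have hsum2 : Summable (fun k : ℕ => ((1/2)*(k:ℝ)^2 + (ρ/2)) * nuWeight η ρ k) :=
      (summable_poly hη hρ 0 0 (1/2) 0 (ρ/2)).congr (fun k => by ring)
    have := Summable.tsum_le_tsum hle hsum1 hsum2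
    rw [tsum_mul_left] at this
    have heq : ∑' k : ℕ, ((1/2)*(k:ℝ)^2 + (ρ/2)) * nuWeight η ρ k
        = (1/2) * nuM η ρ 2 + (ρ/2) * nuM η ρ 0 := by
      rw [show (fun k : ℕ => ((1/2)*(k:ℝ)^2 + (ρ/2)) * nuWeight η ρ k)
          = (fun k : ℕ => (0*(k:ℝ)^4 + 0*(k:ℝ)^3 + (1/2)*(k:ℝ)^2 + 0*(k:ℝ) + (ρ/2)) * nuWeight η ρ k)
          from funext fun k => by ring, tsum_poly hη hρ]
      ring
    calc s * nuM η ρ 1 = s * ∑' k : ℕ, (k:ℝ)^1 * nuWeight η ρ k := rfl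
      _ ≤ _ := by rw [← heq]; exact this
  have hA := momentA hη hρ
  have hM1 := nuM_nonneg hη hρ 1
  have hM0 := nuM_nonneg hη hρ 0
  -- s*M1 ≤ ρ*M0 - (η/2)*M1, and |η| ≤ s
  have habs1 : -s ≤ η := by have := neg_abs_le η; linarith
  have hM2 : nuM η ρ 2 = ρ * nuM η ρ 0 - η * nuM η ρ 1 := by linarith
  -- s*M1 ≤ ρ*M0 - (η/2)*M1 ; with η ≥ -s get (s/2)*M1 ≤ ρ*M0 = s^2*M0
  nlinarith [mul_le_mul_of_nonneg_right habs1 hM1, hs0, mul_pos hs0 hs0]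


set_option maxHeartbeats 1000000 in
/-- `A_ρ/√ρ` converges in probability (hence in distribution) to the constant `1`:
for every `ε > 0`, the `ν_{ρ,η}`-mass of `{k : |k/√ρ − 1| ≥ ε}` tends to `0`. -/
theorem nu_law_of_large_numbers (η : ℝ) (hη : -1 < η) :
    ∀ ε : ℝ, 0 < ε →
      Filter.Tendsto
        (fun ρ : ℝ => ∑' k : ℕ,
          if ε ≤ |(k : ℝ) / Real.sqrt ρ - 1| then nuDist η ρ k else 0)
        Filter.atTop (nhds 0) := by
  intro ε hε
  set δ : ℝ := min ε 1 / 2 with hδdef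
  have hδ0 : 0 < δ := by
    have := lt_min hε one_pos
    rw [hδdef]; linarith
  have hδε : 2*δ ≤ ε := by
    have := min_le_left ε 1
    rw [hδdef]; linarith
  have hδ1 : 2*δ ≤ 1 := by
    have := min_le_right ε 1
    rw [hδdef]; linarith
  have hsqrt : Filter.Tendsto Real.sqrt atTop atTop := by
    rw [tendsto_atTop]
    intro b
    filter_upwards [eventually_ge_atTop (b^2)] with ρ hb
    calc b ≤ |b| := le_abs_self b
      _ = Real.sqrt (b^2) := (Real.sqrt_sq_eq_abs b).symm
      _ ≤ Real.sqrt ρ := Real.sqrt_le_sqrt hb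
  apply squeeze_zero' (g := fun ρ : ℝ => 5 / (δ^2 * Real.sqrt ρ))
  · -- nonnegativity
    filter_upwards [eventually_gt_atTop (0:ℝ)] with ρ hρ
    apply tsum_nonneg
    intro k
    split_ifs with h
    · exact div_nonneg (nuWeight_pos hη hρ k).le
        (tsum_nonneg fun j => (nuWeight_pos hη hρ j).le)
    · exact le_refl 0
  · -- main bound
    have hevC := hsqrt.eventually_ge_atTop (abs η * (1+ε)/ε + 2*abs η/ε + (1+η) + 1)
    filter_upwards [eventually_ge_atTop (1:ℝ), hevC] with ρ hρ1 hsC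
    have hρ : (0:ℝ) < ρ := lt_of_lt_of_le one_pos hρ1
    set s := Real.sqrt ρ with hsdef
    have hs0 : 0 < s := Real.sqrt_pos.2 hρ
    have hs2 : s^2 = ρ := Real.sq_sqrt hρ.le
    have habs : 0 ≤ |η| := abs_nonneg η
    have hdiv1 : |η| * (1+ε)/ε ≤ s := by
      have h2' : 0 ≤ 2 * |η|/ε := by positivity
      have h3' : 0 ≤ 1 + η := by linarith
      linarith
    have hdiv2 : 2 * |η|/ε ≤ s := by
      have h1' : 0 ≤ |η| * (1+ε)/ε := by positivity
      have h3' : 0 ≤ 1 + η := by linarith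
      linarith
    have h1 : |η| * (1+ε) ≤ ε*s := by
      rw [div_le_iff₀ hε] at hdiv1; linarith
    have h2 : 2 * |η| ≤ ε*s := by
      rw [div_le_iff₀ hε] at hdiv2; linarith
    have h3 : 1+η ≤ s := by
      have h1' : 0 ≤ |η| * (1+ε)/ε := by positivity
      have h2' : 0 ≤ 2 * |η|/ε := by positivity
      linarith
    have haux : |η| ≤ s := by nlinarith
    have hZ : 0 < nuM η ρ 0 := nuM_zero_pos hη hρ
    -- event implication
    have himp : ∀ k : ℕ, ε ≤ |(k:ℝ)/s - 1| → (δ*ρ)^2 ≤ ((k:ℝ)^2 + η*(k:ℝ) - ρ)^2 := by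
      intro k hk
      have hk0 : (0:ℝ) ≤ k := Nat.cast_nonneg k
      have key : δ*ρ ≤ |(k:ℝ)^2 + η*(k:ℝ) - ρ| := by
        rcases le_or_gt ((1+ε)*s) (k:ℝ) with hup | hlo
        · refine le_trans ?_ (le_abs_self _)
          have hprod : 0 ≤ ((k:ℝ) - (1+ε)*s) * ((k:ℝ) + (1+ε)*s - |η|) := by
            apply mul_nonneg (by linarith)
            nlinarith
          nlinarith [neg_abs_le η, mul_le_mul_of_nonneg_right h1 hs0.le,
            mul_nonneg (show (0:ℝ) ≤ η + |η| by linarith [neg_abs_le η]) hk0]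
        · have hklo : (k:ℝ) ≤ (1-ε)*s := by
            rcases abs_cases ((k:ℝ)/s - 1) with ⟨heq, hsgn⟩ | ⟨heq, hsgn⟩
            · exfalso
              rw [heq] at hk
              have : (1+ε)*s ≤ (k:ℝ) := by
                have := (le_div_iff₀ hs0).1 (by linarith : 1 + ε ≤ (k:ℝ)/s)
                linarith
              linarith
            · rw [heq] at hk
              have : (k:ℝ)/s ≤ 1 - ε := by linarith
              have := (div_le_iff₀ hs0).1 this
              linarith
          refine le_trans ?_ (neg_le_abs _)
          have hp2 : 0 ≤ (|η| - η) * (k:ℝ) :=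
            mul_nonneg (by linarith [le_abs_self η]) hk0
          have hp3 : 2 * |η| * (k:ℝ) ≤ ε*s*(k:ℝ) := mul_le_mul_of_nonneg_right h2 hk0
          have hp4 : 0 ≤ ((1-ε)*s - (k:ℝ)) * (s + (k:ℝ)) :=
            mul_nonneg (by linarith) (by linarith)
          have hp5 : 2*δ*(s*s) ≤ ε*(s*s) :=
            mul_le_mul_of_nonneg_right hδε (mul_pos hs0 hs0).le
          nlinarith [mul_nonneg hk0 hs0.le]
      calc (δ*ρ)^2 ≤ |(k:ℝ)^2 + η*(k:ℝ) - ρ|^2 :=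
            pow_le_pow_left₀ (by positivity) key 2
        _ = ((k:ℝ)^2 + η*(k:ℝ) - ρ)^2 := sq_abs _
    -- Markov
    have hden : (0:ℝ) < (δ*ρ)^2 * nuM η ρ 0 := mul_pos (by positivity) hZ
    have hsummand : ∀ k : ℕ, (if ε ≤ |(k:ℝ)/s - 1| then nuDist η ρ k else 0)
        ≤ (((k:ℝ)^2 + η*(k:ℝ) - ρ)^2 * nuWeight η ρ k) / ((δ*ρ)^2 * nuM η ρ 0) := by
      intro k
      have hw := nuWeight_pos hη hρ k
      split_ifs with hcond
      · have hnum := himp k hcond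
        rw [nuDist, nuZ_eq, div_le_div_iff₀ hZ hden]
        nlinarith [mul_le_mul_of_nonneg_right hnum (mul_nonneg hw.le hZ.le)]
      · exact div_nonneg (mul_nonneg (sq_nonneg _) hw.le) hden.le
    have hRHSsum : Summable (fun k : ℕ =>
        (((k:ℝ)^2 + η*(k:ℝ) - ρ)^2 * nuWeight η ρ k) / ((δ*ρ)^2 * nuM η ρ 0)) :=
      ((summable_poly hη hρ 1 (2*η) (η^2-2*ρ) (-2*η*ρ) (ρ^2)).congr
        (fun k => by ring)).div_const _
    have hLHSsum : Summable (fun k : ℕ => if ε ≤ |(k:ℝ)/s - 1| then nuDist η ρ k else 0) := by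
      apply Summable.of_nonneg_of_le _ hsummand hRHSsum
      intro k
      split_ifs with h
      · exact div_nonneg (nuWeight_pos hη hρ k).le
          (tsum_nonneg fun j => (nuWeight_pos hη hρ j).le)
      · exact le_refl 0
    have hT := Summable.tsum_le_tsum hsummand hLHSsum hRHSsum
    rw [tsum_div_const, S2_eq hη hρ] at hT
    refine le_trans hT ?_
    have hM1b := M1_bound hη hρ haux
    have hM1 := nuM_nonneg hη hρ 1
    rw [div_le_div_iff₀ hden (by positivity)]
    -- (2ρM1 + (1+η)ρM0) * (δ²s) ≤ 5 * ((δρ)² M0)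
    nlinarith [mul_le_mul_of_nonneg_left hM1b (show (0:ℝ) ≤ 2*ρ*δ^2*s by positivity),
      mul_le_mul_of_nonneg_right h3
        (mul_nonneg (mul_nonneg (mul_nonneg hρ.le hZ.le) (sq_nonneg δ)) hs0.le),
      mul_pos hρ hρ, hZ.le]
  · -- limit
    exact Filter.Tendsto.div_atTop tendsto_const_nhds
      (hsqrt.const_mul_atTop (by positivity : (0:ℝ) < δ^2))
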